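/- arXiv:math/0312007 — 2 statements merged into one kernel-verified Lean document; each statement's English description precedes it below -/
import Mathlib

section
/- [Theorem 4.4, existence] Every Ω ∈ Λ with integer coefficients satisfying σ(Ω) = Ω admits a decomposition (P_S) in which, for every even-cardinality subset S of {1,…,n}, the polynomial 2·P_S has integer coefficients; moreover, if n is even, then P_{{1,…,n}} itself has integer coefficients. -/
noncomputable section

/-- The Laurent polynomial ring `Λ = ℚ[x₁^{±1},…,x_n^{±1}]`. -/
abbrev Lam (n : ℕ) : Type := AddMonoidAlgebra ℚ (Fin n →₀ ℤ)

/-- The variable `x_i ∈ Λ`. -/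
def Xv {n : ℕ} (i : Fin n) : Lam n :=
  AddMonoidAlgebra.single (Finsupp.single i 1) 1

/-- The bracket `{f} := f + σ(f)`. -/
def bracket {n : ℕ} (σ : Lam n →+* Lam n) (f : Lam n) : Lam n := f + σ f

/-- `σ` is the ring endomorphism of `Λ` determined by `σ(x_i) = −x_i⁻¹`,
i.e. `σ(x_i)·x_i = −1` for all `i`. -/
def IsSigma {n : ℕ} (σ : Lam n →+* Lam n) : Prop :=
  ∀ i : Fin n, σ (Xv i) * Xv i = -1

/-- The exponent vector of the alternating monomial
`M_S = x_{i₁} x_{i₂}⁻¹ ⋯ x_{i_{2k-1}} x_{i_{2k}}⁻¹`, where `S = {i₁ < ⋯ < i_{2k}}`. -/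
def expS {n : ℕ} (S : Finset (Fin n)) : Fin n →₀ ℤ :=
  (((S.sort (· ≤ ·)).zipIdx).map fun p => Finsupp.single p.1 ((-1 : ℤ) ^ p.2)).sum

/-- The alternating monomial `M_S ∈ Λ`. -/
def MS {n : ℕ} (S : Finset (Fin n)) : Lam n :=
  AddMonoidAlgebra.single (expS S) 1

/-- Evaluation of a polynomial `P ∈ ℚ[z₁,…,z_n]` at `z_i = {x_i}`. -/
def evalBr {n : ℕ} (σ : Lam n →+* Lam n) (P : MvPolynomial (Fin n) ℚ) : Lam n :=
  MvPolynomial.aeval (fun i => bracket σ (Xv i)) P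

/-- A decomposition (4) of `Ω`: `Ω = Σ_S {M_S}·P_S({x₁},…,{x_n})`,
the sum being over the even-cardinality subsets `S` of the set of variables. -/
def IsDecomposition {n : ℕ} (σ : Lam n →+* Lam n) (Ω : Lam n)
    (P : Finset (Fin n) → MvPolynomial (Fin n) ℚ) : Prop :=
  Ω = ∑ S ∈ Finset.univ.filter (fun S : Finset (Fin n) => Even S.card),
        bracket σ (MS S) * evalBr σ (P S)

/-!
On monomials `σ(x^a) = (-1)^{a₁+⋯+aₙ} x^{-a}`, and `{f}·g = {f g}` whenever `σ g = g`; hence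
`{x^a}·{x_i} = {x^{a+e_i}} - {x^{a-e_i}}`. Read backwards, this rewrites `{x^a}` through
`{x^{a∓2e_i}}` and `{x_i}·{x^{a∓e_i}}`, which lowers `∑|a_i|` or, for a `±1` entry, flips its sign.
So every `{x^a}` reduces to the brackets `{M_S}`. For `|S|` even, `{M_S}` is a term of (4). For
`|S|` odd, flipping the signs of `M_S` one at a time, in increasing order, turns `M_S` into
`M_S⁻¹`, and `{M_S⁻¹} = -{M_S}`; every flip costs `±{x_i}{M_{S∖i}}`, so
`2{M_S} = ∑_{i ∈ S} ±{x_i}{M_{S∖i}}`. This is the only division by `2`, and it never touches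
`P_{{1,…,n}}`.

A symmetric `Ω = ∑ c_a x^a` is `{f}` for `f = ∑_{a >lex 0} c_a x^a + c_0/2`, which reduces the
theorem to the brackets `{x^a}` and to the constant `c_0 = (c_0/2)·{M_∅}`.
-/

open Finset
open Finsupp (single)

namespace LaurentDecomposition

variable {ι : Type*} {n : ℕ} {σ : Lam n →+* Lam n}

def mon (a : Fin n →₀ ℤ) : Lam n := AddMonoidAlgebra.single a 1

lemma mon_zero : (mon 0 : Lam n) = 1 := rfl

lemma mon_add (a b : Fin n →₀ ℤ) : (mon (a + b) : Lam n) = mon a * mon b := by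
  simp [mon, AddMonoidAlgebra.single_mul_single]

lemma Xv_eq_mon (i : Fin n) : Xv i = mon (single i 1) := rfl

lemma MS_eq_mon (S : Finset (Fin n)) : MS S = mon (expS S) := rfl

def sgn (a : ι →₀ ℤ) : ℤ := a.degree.negOnePow

lemma sgn_zero : sgn (0 : ι →₀ ℤ) = 1 := by simp [sgn]

lemma sgn_add (a b : ι →₀ ℤ) : sgn (a + b) = sgn a * sgn b := by
  simp [sgn, Int.negOnePow_add]

lemma sgn_neg (a : ι →₀ ℤ) : sgn (-a) = sgn a := by simp [sgn, Int.negOnePow_neg]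

lemma sgn_mul_self (a : ι →₀ ℤ) : sgn a * sgn a = 1 := by
  simp [sgn, ← Units.val_mul, Int.units_mul_self]

lemma sgn_single (i : ι) (k : ℤ) : sgn (single i k) = k.negOnePow := by simp [sgn]

lemma map_mon_mul_mon (hσ : IsSigma σ) (a : Fin n →₀ ℤ) : σ (mon a) * mon a = sgn a := by
  let H : AddSubgroup (Fin n →₀ ℤ) :=
    { carrier := {a | σ (mon a) * mon a = sgn a}
      zero_mem' := by simp [mon_zero, sgn_zero]
      add_mem' := fun {a b} (ha : _ = _) (hb : _ = _) => by
        change _ = _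
        rw [mon_add, map_mul, mul_mul_mul_comm, ha, hb, sgn_add, Int.cast_mul]
      neg_mem' := fun {a} (ha : _ = _) => by
        change _ = _
        have h : σ (mon (-a)) * mon (-a) * (σ (mon a) * mon a) = 1 := by
          rw [mul_mul_mul_comm, ← map_mul, ← mon_add, neg_add_cancel, mon_zero, map_one, one_mul]
        rw [ha] at h
        calc σ (mon (-a)) * mon (-a)
            = σ (mon (-a)) * mon (-a) * (sgn a * sgn a : ℤ) := by rw [sgn_mul_self]; simp
          _ = sgn (-a) := by push_cast; rw [← mul_assoc, h, one_mul, sgn_neg] }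
  have hgen (i : Fin n) : single i 1 ∈ H := by
    change _ = _
    rw [← Xv_eq_mon, hσ i, sgn_single]
    simp
  suffices a ∈ H from this
  induction a using Finsupp.induction_linear with
  | zero => exact H.zero_mem
  | add a b ha hb => exact H.add_mem ha hb
  | single i k => simpa using H.zsmul_mem (hgen i) k

lemma map_mon (hσ : IsSigma σ) (a : Fin n →₀ ℤ) : σ (mon a) = sgn a * mon (-a) := by
  rw [← map_mon_mul_mon hσ, mul_assoc, ← mon_add, add_neg_cancel, mon_zero, mul_one]

lemma map_map_mon (hσ : IsSigma σ) (a : Fin n →₀ ℤ) : σ (σ (mon a)) = mon a := by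
  rw [map_mon hσ, map_mul, map_intCast, map_mon hσ, neg_neg, sgn_neg, ← mul_assoc,
    ← Int.cast_mul, sgn_mul_self, Int.cast_one, one_mul]

lemma coeff_map_apply (hσ : IsSigma σ) (f : Lam n) (b : Fin n →₀ ℤ) :
    (σ f).coeff b = sgn b * f.coeff (-b) := by
  induction f using AddMonoidAlgebra.induction_linear with
  | zero => simp
  | add f g hf hg => simp [hf, hg, mul_add]
  | single a q =>
    have : AddMonoidAlgebra.single a q = q • mon a := by simp [mon]
    rw [this, map_rat_smul, map_mon hσ, ← zsmul_eq_mul]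
    rcases eq_or_ne b (-a) with rfl | hb
    · simp [mon, sgn_neg, mul_comm]
    · simp [mon, hb, neg_eq_iff_eq_neg.not.mpr hb]

lemma bracket_sub (f g : Lam n) : bracket σ (f - g) = bracket σ f - bracket σ g := by
  simp only [bracket, map_sub]
  abel

lemma bracket_mon (hσ : IsSigma σ) (a : Fin n →₀ ℤ) :
    bracket σ (mon a) = mon a + sgn a * mon (-a) := by
  rw [bracket, map_mon hσ]

lemma bracket_mon_neg (hσ : IsSigma σ) (a : Fin n →₀ ℤ) :
    bracket σ (mon (-a)) = sgn a * bracket σ (mon a) := by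
  rw [bracket_mon hσ, bracket_mon hσ, neg_neg, sgn_neg, mul_add, ← mul_assoc, ← Int.cast_mul,
    sgn_mul_self, Int.cast_one, one_mul, add_comm]

lemma map_bracket_of_map_map {g : Lam n} (hg : σ (σ g) = g) : σ (bracket σ g) = bracket σ g := by
  rw [bracket, map_add, hg, add_comm]

lemma bracket_mul_of_map_eq (f : Lam n) {g : Lam n} (hg : σ g = g) :
    bracket σ f * g = bracket σ (f * g) := by
  rw [bracket, bracket, map_mul, hg, add_mul]

lemma bracket_Xv (hσ : IsSigma σ) (i : Fin n) :
    bracket σ (Xv i) = mon (single i 1) - mon (-single i 1) := by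
  rw [Xv_eq_mon, bracket_mon hσ, sgn_single]
  simp [sub_eq_add_neg]

lemma bracket_mon_mul_bracket_Xv (hσ : IsSigma σ) (a : Fin n →₀ ℤ) (i : Fin n) :
    bracket σ (mon a) * bracket σ (Xv i)
      = bracket σ (mon (a + single i 1)) - bracket σ (mon (a - single i 1)) := by
  rw [bracket_mul_of_map_eq _ (map_bracket_of_map_map (by rw [Xv_eq_mon, map_map_mon hσ])),
    bracket_Xv hσ, mul_sub, ← mon_add, ← mon_add, ← sub_eq_add_neg, bracket_sub]

lemma bracket_mon_add_single (hσ : IsSigma σ) (c : Fin n →₀ ℤ) (i : Fin n) {ε : ℤ}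
    (hε : ε = 1 ∨ ε = -1) :
    bracket σ (mon (c + single i ε))
      = bracket σ (mon (c - single i ε)) + ε • (bracket σ (Xv i) * bracket σ (mon c)) := by
  rw [mul_comm, bracket_mon_mul_bracket_Xv hσ]
  rcases hε with rfl | rfl
  · simp
  · simp [Finsupp.single_neg, ← sub_eq_add_neg]

def altSum : List ι → (ι →₀ ℤ)
  | [] => 0
  | i :: l => single i 1 - altSum l

lemma sum_map_zipIdx_eq_altSum (l : List ι) (k : ℕ) :
    ((l.zipIdx k).map fun p => single p.1 ((-1 : ℤ) ^ p.2)).sum = (-1 : ℤ) ^ k • altSum l := by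
  induction l generalizing k with
  | nil => simp [altSum]
  | cons i l ih =>
    rw [List.zipIdx_cons, List.map_cons, List.sum_cons, ih, altSum, smul_sub, pow_succ,
      Finsupp.smul_single_one, mul_neg_one, neg_smul, sub_eq_add_neg]

lemma altSum_append (m l : List ι) :
    altSum (m ++ l) = altSum m + (-1 : ℤ) ^ m.length • altSum l := by
  induction m with
  | nil => simp [altSum]
  | cons i m ih =>
    rw [List.cons_append, altSum, altSum, ih, List.length_cons, pow_succ, mul_neg_one, neg_smul]
    abel

lemma sgn_altSum (l : List ι) : sgn (altSum l) = (-1) ^ l.length := by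
  induction l with
  | nil => simp [altSum, sgn_zero]
  | cons i l ih =>
    rw [altSum, sub_eq_add_neg, sgn_add, sgn_neg, ih, sgn_single, List.length_cons, pow_succ]
    simp [mul_comm]

lemma altSum_apply_of_not_mem {l : List ι} {i : ι} (h : i ∉ l) : altSum l i = 0 := by
  induction l with
  | nil => rfl
  | cons j l ih =>
    rw [List.mem_cons, not_or] at h
    simp [altSum, Ne.symm h.1, ih h.2]

lemma natAbs_altSum_apply_of_mem {l : List ι} (hl : l.Nodup) {i : ι} (h : i ∈ l) :
    (altSum l i).natAbs = 1 := by
  classical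
  induction l with
  | nil => simp at h
  | cons j l ih =>
    rw [List.nodup_cons] at hl
    rcases List.mem_cons.mp h with rfl | h
    · simp [altSum, altSum_apply_of_not_mem hl.1]
    · have hij : j ≠ i := fun hji => hl.1 (hji ▸ h)
      simpa [altSum, Finsupp.single_apply, hij] using ih hl.2 h

lemma expS_eq_altSum (S : Finset (Fin n)) : expS S = altSum (S.sort (· ≤ ·)) := by
  rw [expS, sum_map_zipIdx_eq_altSum, pow_zero, one_smul]

lemma expS_toFinset {l : List (Fin n)} (hl : l.Pairwise (· < ·)) : expS l.toFinset = altSum l := by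
  rw [expS_eq_altSum, (List.toFinset_sort (· ≤ ·) (hl.imp ne_of_lt)).mpr (hl.imp le_of_lt)]

lemma expS_apply_of_not_mem {T : Finset (Fin n)} {i : Fin n} (h : i ∉ T) : expS T i = 0 := by
  rw [expS_eq_altSum]
  exact altSum_apply_of_not_mem (by simpa using h)

lemma natAbs_expS_apply_of_mem {T : Finset (Fin n)} {i : Fin n} (h : i ∈ T) :
    (expS T i).natAbs = 1 := by
  rw [expS_eq_altSum]
  exact natAbs_altSum_apply_of_mem (sort_nodup _ _) (by simpa using h)

abbrev intPolys (ι : Type*) : Subring (MvPolynomial ι ℚ) :=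
  (MvPolynomial.map (Int.castRingHom ℚ)).range

lemma X_mem_intPolys (i : ι) : MvPolynomial.X i ∈ intPolys ι :=
  ⟨MvPolynomial.X i, MvPolynomial.map_X _ _⟩

lemma exists_coeff_eq_of_mem_intPolys {P : MvPolynomial ι ℚ} (hP : P ∈ intPolys ι)
    (d : ι →₀ ℕ) : ∃ m : ℤ, P.coeff d = m := by
  obtain ⟨Q, rfl⟩ := hP
  exact ⟨Q.coeff d, MvPolynomial.coeff_map _ _ _⟩

variable (σ) in
def decomp : (Finset (Fin n) → MvPolynomial (Fin n) ℚ) →ₗ[ℚ] Lam n where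
  toFun P := ∑ S ∈ univ.filter (fun S : Finset (Fin n) => Even S.card),
    bracket σ (MS S) * evalBr σ (P S)
  map_add' P Q := by
    rw [← sum_add_distrib]
    exact sum_congr rfl fun S _ => by rw [Pi.add_apply, evalBr, map_add, mul_add]; rfl
  map_smul' q P := by
    rw [RingHom.id_apply, Finset.smul_sum]
    exact sum_congr rfl fun S _ => by rw [Pi.smul_apply, evalBr, map_smul, mul_smul_comm]; rfl

lemma decomp_apply (P : Finset (Fin n) → MvPolynomial (Fin n) ℚ) :
    decomp σ P = ∑ S ∈ univ.filter (fun S : Finset (Fin n) => Even S.card),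
      bracket σ (MS S) * evalBr σ (P S) := rfl

lemma decomp_pi_single {S : Finset (Fin n)} (hS : Even S.card) (P : MvPolynomial (Fin n) ℚ) :
    decomp σ (Pi.single S P) = bracket σ (MS S) * evalBr σ P := by
  rw [decomp_apply, sum_eq_single S]
  · simp
  · intro R _ hR
    simp [hR, evalBr]
  · simp [hS]

lemma decomp_X_mul (i : Fin n) (P : Finset (Fin n) → MvPolynomial (Fin n) ℚ) :
    decomp σ (fun S => MvPolynomial.X i * P S) = bracket σ (Xv i) * decomp σ P := by
  simp only [decomp_apply, Finset.mul_sum, evalBr, map_mul, MvPolynomial.aeval_X]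
  exact sum_congr rfl fun _ _ => mul_left_comm _ _ _

/- Halving an element of `intReps` has to keep `P univ` integral, hence the condition
`P univ = 0`. -/
variable (σ) in
def intReps : AddSubgroup (Lam n) where
  carrier := {ω | ∃ P, decomp σ P = ω ∧ (∀ S, P S ∈ intPolys (Fin n)) ∧ P univ = 0}
  zero_mem' := ⟨0, map_zero _, fun _ => zero_mem _, rfl⟩
  add_mem' := by
    rintro _ _ ⟨P, rfl, hP, hP0⟩ ⟨Q, rfl, hQ, hQ0⟩
    exact ⟨P + Q, map_add _ _ _, fun S => add_mem (hP S) (hQ S), by simp [hP0, hQ0]⟩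
  neg_mem' := by
    rintro _ ⟨P, rfl, hP, hP0⟩
    exact ⟨-P, map_neg _ _, fun S => neg_mem (hP S), by simp [hP0]⟩

variable (σ) in
def halfReps : AddSubgroup (Lam n) where
  carrier := {ω | ∃ P, decomp σ P = ω ∧ (∀ S, (2 : ℚ) • P S ∈ intPolys (Fin n)) ∧
    P univ ∈ intPolys (Fin n)}
  zero_mem' := ⟨0, map_zero _, fun _ => by simp, zero_mem _⟩
  add_mem' := by
    rintro _ _ ⟨P, rfl, hP, hP0⟩ ⟨Q, rfl, hQ, hQ0⟩
    exact ⟨P + Q, map_add _ _ _, fun S => by simpa using add_mem (hP S) (hQ S), add_mem hP0 hQ0⟩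
  neg_mem' := by
    rintro _ ⟨P, rfl, hP, hP0⟩
    exact ⟨-P, map_neg _ _, fun S => by simpa using neg_mem (hP S), neg_mem hP0⟩

lemma bracket_Xv_mul_mem_intReps (i : Fin n) {ω : Lam n} (hω : ω ∈ intReps σ) :
    bracket σ (Xv i) * ω ∈ intReps σ := by
  obtain ⟨P, rfl, hP, hP0⟩ := hω
  exact ⟨_, decomp_X_mul i P, fun S => mul_mem (X_mem_intPolys i) (hP S), by simp [hP0]⟩

lemma bracket_Xv_mul_mem_halfReps (i : Fin n) {ω : Lam n} (hω : ω ∈ halfReps σ) :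
    bracket σ (Xv i) * ω ∈ halfReps σ := by
  obtain ⟨P, rfl, hP, hP0⟩ := hω
  exact ⟨_, decomp_X_mul i P, fun S => by simpa using mul_mem (X_mem_intPolys i) (hP S),
    mul_mem (X_mem_intPolys i) hP0⟩

lemma bracket_MS_mem_intReps {S : Finset (Fin n)} (hS : Even S.card) (hSu : S ≠ univ) :
    bracket σ (MS S) ∈ intReps σ :=
  ⟨Pi.single S 1, by simp [decomp_pi_single hS, evalBr],
    fun R => by by_cases h : R = S <;> simp [h, one_mem, zero_mem], by simp [Ne.symm hSu]⟩

lemma bracket_MS_mem_halfReps_of_even {S : Finset (Fin n)} (hS : Even S.card) :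
    bracket σ (MS S) ∈ halfReps σ :=
  ⟨Pi.single S 1, by simp [decomp_pi_single hS, evalBr],
    fun R => by by_cases h : R = S <;> simp [h, two_smul, add_mem, one_mem, zero_mem],
    by by_cases h : univ = S <;> simp [h, one_mem, zero_mem]⟩

lemma half_smul_mem_halfReps {ω : Lam n} (hω : ω ∈ intReps σ) : (1 / 2 : ℚ) • ω ∈ halfReps σ := by
  obtain ⟨P, rfl, hP, hP0⟩ := hω
  exact ⟨(1 / 2 : ℚ) • P, map_smul _ _ _, fun S => by simpa [smul_smul] using hP S,
    by simp [hP0, zero_mem]⟩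

/- Flip the entries of `altSum l` one at a time, left to right: by `bracket_mon_add_single`
the flip at `i` costs `±{x_i}·{M_S}`, where `S` is the set of the other entries of `m ++ l`. -/
lemma bracket_mon_sub_mem_intReps (hσ : IsSigma σ) (l m : List (Fin n))
    (hsort : (m ++ l).Pairwise (· < ·)) (hodd : Odd (m ++ l).length) :
    bracket σ (mon (-altSum m + (-1 : ℤ) ^ m.length • altSum l))
      - bracket σ (mon (-altSum (m ++ l))) ∈ intReps σ := by
  induction l generalizing m with
  | nil => simp [altSum]
  | cons i l ih =>
    set ε : ℤ := (-1) ^ m.length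
    set c := -altSum (m ++ l)
    have hsub : (m ++ l).Sublist (m ++ i :: l) := (List.sublist_cons_self i l).append_left m
    have hi : i ∉ m ++ l := (List.nodup_cons.mp (List.nodup_middle.mp (hsort.imp ne_of_lt))).1
    have heven : Even (m ++ l).length := by simpa [Nat.odd_add_one, ← add_assoc] using hodd
    have hmid : m ++ [i] ++ l = m ++ i :: l := by simp
    have hstart : -altSum m + ε • altSum (i :: l) = c + single i ε := by
      simp only [c, ε, altSum_append, altSum, smul_sub, Finsupp.smul_single_one]
      abel
    have hnext : -altSum (m ++ [i]) + (-1 : ℤ) ^ (m ++ [i]).length • altSum l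
        = c - single i ε := by
      simp only [c, ε, altSum_append, altSum, List.length_append, List.length_singleton, pow_succ,
        sub_zero, mul_neg_one, neg_smul, Finsupp.smul_single_one]
      abel
    have hc : bracket σ (mon c) = bracket σ (MS (m ++ l).toFinset) := by
      rw [bracket_mon_neg hσ, sgn_altSum, heven.neg_one_pow, Int.cast_one, one_mul, MS_eq_mon,
        expS_toFinset (hsort.sublist hsub)]
    have hatom : bracket σ (MS (m ++ l).toFinset) ∈ intReps σ := by
      refine bracket_MS_mem_intReps ?_ fun h => hi (List.mem_toFinset.mp (h ▸ mem_univ i))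
      rwa [List.toFinset_card_of_nodup ((hsort.sublist hsub).imp ne_of_lt)]
    have hrest := ih (m ++ [i]) (by rwa [hmid]) (by rwa [hmid])
    rw [hnext, hmid] at hrest
    rw [hstart, bracket_mon_add_single hσ c i (neg_one_pow_eq_or ℤ _), add_sub_right_comm]
    exact add_mem hrest (zsmul_mem (bracket_Xv_mul_mem_intReps i (hc ▸ hatom)) ε)

lemma two_smul_bracket_MS_mem_intReps (hσ : IsSigma σ) {T : Finset (Fin n)} (hT : Odd T.card) :
    (2 : ℚ) • bracket σ (MS T) ∈ intReps σ := by
  have h := bracket_mon_sub_mem_intReps (σ := σ) hσ (T.sort (· ≤ ·)) []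
    (by simpa using (sortedLT_sort T).pairwise) (by simpa using hT)
  rw [List.nil_append, altSum, neg_zero, zero_add, List.length_nil, pow_zero, one_smul,
    bracket_mon_neg hσ, sgn_altSum, length_sort, hT.neg_one_pow, ← expS_eq_altSum] at h
  simpa [MS_eq_mon, two_smul] using h

lemma bracket_MS_mem_halfReps (hσ : IsSigma σ) (T : Finset (Fin n)) :
    bracket σ (MS T) ∈ halfReps σ := by
  rcases Nat.even_or_odd T.card with hT | hT
  · exact bracket_MS_mem_halfReps_of_even hT
  · simpa [smul_smul] using half_smul_mem_halfReps (two_smul_bracket_MS_mem_intReps hσ hT)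

def absSum [Fintype ι] (a : ι →₀ ℤ) : ℕ := ∑ i, (a i).natAbs

def numMismatch (a : Fin n →₀ ℤ) : ℕ := #{i | a i ≠ expS a.support i}

lemma absSum_sub_single [Fintype ι] [DecidableEq ι] (a : ι →₀ ℤ) (i : ι) (k : ℤ) :
    absSum (a - single i k) + (a i).natAbs = absSum a + (a i - k).natAbs := by
  have hrest : ∑ j ∈ univ.erase i, ((a - single i k) j).natAbs
      = ∑ j ∈ univ.erase i, (a j).natAbs :=
    sum_congr rfl fun j hj => by simp [Ne.symm (ne_of_mem_erase hj)]
  rw [absSum, absSum, ← add_sum_erase _ _ (mem_univ i), ← add_sum_erase _ _ (mem_univ i), hrest,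
    Finsupp.sub_apply, Finsupp.single_eq_same]
  ring

lemma numMismatch_sub_single_lt {a : Fin n →₀ ℤ} {i : Fin n} (hai : (a i).natAbs = 1)
    (hmis : a i ≠ expS a.support i) : numMismatch (a - single i (2 * a i)) < numMismatch a := by
  set b := a - single i (2 * a i)
  have hbi : b i = -a i := by
    simp only [b, Finsupp.sub_apply, Finsupp.single_eq_same]
    ring
  have hbj (j : Fin n) (hj : j ≠ i) : b j = a j := by simp [b, Ne.symm hj]
  have hsupp : b.support = a.support := by
    ext j
    rcases eq_or_ne j i with rfl | hj
    · simp [hbi]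
    · simp [hbj j hj]
  have hexp : expS a.support i = -a i := by
    have := natAbs_expS_apply_of_mem (Finsupp.mem_support_iff.mpr (by omega : a i ≠ 0))
    omega
  have hsubset : ({j | b j ≠ expS b.support j} : Finset (Fin n))
      ⊆ ({j | a j ≠ expS a.support j} : Finset (Fin n)).erase i := by
    intro j hj
    simp only [mem_filter, mem_univ, true_and, mem_erase, hsupp] at hj ⊢
    rcases eq_or_ne j i with rfl | hji
    · exact absurd (hbi.trans hexp.symm) hj
    · exact ⟨hji, hbj j hji ▸ hj⟩
  exact (card_le_card hsubset).trans_lt (card_erase_lt_of_mem (by simpa using hmis))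

/- Each step lowers `absSum a`, or keeps it and makes one more entry of `a` agree with the
alternating pattern `expS a.support`. -/
theorem bracket_mon_mem_halfReps (hσ : IsSigma σ) (a : Fin n →₀ ℤ) :
    bracket σ (mon a) ∈ halfReps σ := by
  by_cases h : ∃ i, a i ≠ 0 ∧ (2 ≤ (a i).natAbs ∨ a i ≠ expS a.support i)
  · obtain ⟨i, hai, hi⟩ := h
    obtain ⟨ε, hε⟩ : ∃ ε : ℤ, ε = 1 ∧ 0 < a i ∨ ε = -1 ∧ a i < 0 := by
      rcases lt_or_gt_of_ne hai with h | h
      exacts [⟨-1, Or.inr ⟨rfl, h⟩⟩, ⟨1, Or.inl ⟨rfl, h⟩⟩]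
    have hlt : absSum (a - single i ε) < absSum a := by
      have := absSum_sub_single a i ε
      omega
    have hlex : Prod.Lex (· < ·) (· < ·)
        (absSum (a - single i ε - single i ε), numMismatch (a - single i ε - single i ε))
        (absSum a, numMismatch a) := by
      have := absSum_sub_single a i (ε + ε)
      rw [sub_sub, ← Finsupp.single_add, Prod.lex_def]
      by_cases h2 : 2 ≤ (a i).natAbs
      · left
        omega
      · right
        have hεa : ε + ε = 2 * a i := by omega
        exact ⟨by omega, hεa ▸ numMismatch_sub_single_lt (by omega) (hi.resolve_left h2)⟩
    rw [← sub_add_cancel a (single i ε), bracket_mon_add_single hσ _ i (hε.imp And.left And.left)]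
    exact add_mem (bracket_mon_mem_halfReps hσ _)
      (zsmul_mem (bracket_Xv_mul_mem_halfReps i (bracket_mon_mem_halfReps hσ _)) _)
  · push Not at h
    have ha : a = expS a.support := Finsupp.ext fun i => by
      by_cases hai : a i = 0
      · rw [hai, expS_apply_of_not_mem (by simpa using hai)]
      · exact (h i hai).2
    rw [ha, ← MS_eq_mon]
    exact bracket_MS_mem_halfReps hσ _
termination_by (absSum a, numMismatch a)
decreasing_by
  · exact hlex
  · exact Prod.Lex.left _ _ hlt

def halfSpaceWeight [LinearOrder ι] (a : ι →₀ ℤ) : ℚ :=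
  if 0 < toLex a then 1 else if a = 0 then 1 / 2 else 0

lemma halfSpaceWeight_add_halfSpaceWeight_neg [LinearOrder ι] (a : ι →₀ ℤ) :
    halfSpaceWeight a + halfSpaceWeight (-a) = 1 := by
  rcases lt_trichotomy (toLex a) 0 with h | h | h
  · have ha : a ≠ 0 := by rintro rfl; exact h.ne rfl
    simp [halfSpaceWeight, h, h.not_gt, ha]
  · norm_num [halfSpaceWeight, toLex_eq_zero.mp h]
  · have ha : a ≠ 0 := by rintro rfl; exact h.ne' rfl
    simp [halfSpaceWeight, h, h.not_gt, ha]

lemma eq_sum_halfSpaceWeight_smul_bracket (hσ : IsSigma σ) {Ω : Lam n} (hsym : σ Ω = Ω) :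
    Ω = ∑ a ∈ Ω.coeff.support, (halfSpaceWeight a * Ω.coeff a) • bracket σ (mon a) := by
  set f : Lam n := ∑ a ∈ Ω.coeff.support, (halfSpaceWeight a * Ω.coeff a) • mon a
  have hf (b : Fin n →₀ ℤ) : f.coeff b = halfSpaceWeight b * Ω.coeff b := by
    by_cases hb : b ∈ Ω.coeff.support
    · simp [f, mon, AddMonoidAlgebra.coeff_sum, Finsupp.single_apply, hb]
    · simp_all [f, mon, AddMonoidAlgebra.coeff_sum, Finsupp.single_apply]
  have hbracket : bracket σ f
      = ∑ a ∈ Ω.coeff.support, (halfSpaceWeight a * Ω.coeff a) • bracket σ (mon a) := by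
    simp [f, bracket, smul_add, sum_add_distrib, map_sum, map_rat_smul]
  rw [← hbracket]
  ext b
  have hΩ := coeff_map_apply hσ Ω b
  rw [hsym] at hΩ
  rw [bracket, AddMonoidAlgebra.coeff_add, Finsupp.add_apply, coeff_map_apply hσ, hf, hf]
  linear_combination (-Ω.coeff b) * halfSpaceWeight_add_halfSpaceWeight_neg b
    + halfSpaceWeight (-b) * hΩ

lemma halfSpaceWeight_smul_bracket_mon_mem_halfReps (hn : 1 ≤ n) (hσ : IsSigma σ)
    (a : Fin n →₀ ℤ) : halfSpaceWeight a • bracket σ (mon a) ∈ halfReps σ := by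
  unfold halfSpaceWeight
  split_ifs with hpos h0
  · simpa using bracket_mon_mem_halfReps hσ a
  · have hempty : (∅ : Finset (Fin n)) ≠ univ := fun h => by
      simpa [← h] using mem_univ (⟨0, hn⟩ : Fin n)
    have h := half_smul_mem_halfReps (bracket_MS_mem_intReps (σ := σ) (by simp) hempty)
    simpa [h0, MS_eq_mon, expS] using h
  · simp

theorem mem_halfReps (hn : 1 ≤ n) (hσ : IsSigma σ) {Ω : Lam n}
    (hint : ∀ a, ∃ m : ℤ, Ω.coeff a = m) (hsym : σ Ω = Ω) : Ω ∈ halfReps σ := by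
  rw [eq_sum_halfSpaceWeight_smul_bracket hσ hsym]
  refine sum_mem fun a _ => ?_
  obtain ⟨m, hm⟩ := hint a
  rw [mul_comm, ← smul_smul, hm, Int.cast_smul_eq_zsmul]
  exact zsmul_mem (halfSpaceWeight_smul_bracket_mon_mem_halfReps hn hσ a) m

end LaurentDecomposition

open LaurentDecomposition

/-- Theorem 4.4 (existence): every symmetric integral Laurent polynomial `Ω` admits a
decomposition `(P_S)` with all `2·P_S` integral; and if `n` is even, `P_{{1,…,n}}` is integral. -/
theorem exists_decomposition (n : ℕ) (hn : 1 ≤ n) (σ : Lam n →+* Lam n) (hσ : IsSigma σ)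
    (Ω : Lam n) (hint : ∀ a : Fin n →₀ ℤ, ∃ m : ℤ, (Ω.coeff : (Fin n →₀ ℤ) →₀ ℚ) a = (m : ℚ))
    (hsym : σ Ω = Ω) :
    ∃ P : Finset (Fin n) → MvPolynomial (Fin n) ℚ,
      IsDecomposition σ Ω P ∧
      (∀ S : Finset (Fin n), Even S.card →
        ∀ d : Fin n →₀ ℕ, ∃ m : ℤ, 2 * (P S).coeff d = (m : ℚ)) ∧
      (Even n → ∀ d : Fin n →₀ ℕ, ∃ m : ℤ, (P (Finset.univ)).coeff d = (m : ℚ)) := by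
  obtain ⟨P, hP, h2P, hPuniv⟩ := mem_halfReps hn hσ hint hsym
  refine ⟨P, hP.symm, fun S _ d => ?_, fun _ d => exists_coeff_eq_of_mem_intPolys hPuniv d⟩
  simpa using exists_coeff_eq_of_mem_intPolys (h2P S) d

end
end

section
/- [Theorem 4.4, uniqueness] If (P_S) and (P′_S) are two decompositions of the same Ω ∈ Λ, then P_S = P′_S for every even-cardinality subset S of {1,…,n}. Equivalently, if a family (Q_S) of polynomials in ℚ[z₁,…,z_n], indexed by the even-cardinality subsets S, satisfies Σ_S {M_S}·Q_S({x₁},…,{x_n}) = 0 in Λ, then Q_S = 0 for every S. -/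
noncomputable section

/-!
Evaluate `x_i ↦ r_i` at real units `r_i`. Then `σ` becomes the flip `r_i ↦ -r_i⁻¹`, which fixes
`{x_i} ↦ r_i - r_i⁻¹`, and every real `z_i` is of the form `r_i - r_i⁻¹`. Averaging over the `2ⁿ`
coordinatewise flips against the sign character of an even set `T` annihilates `{M_S}` unless
`T ⊆ S`, and turns `Σ_S {M_S} Q_S({x}) = 0` into the polynomial identity
`Σ_{S ⊇ T} c_{T,S} Q_S = 0` with `c_{T,T} = 2^{n - |T|}`. This system is triangular with respect to
inclusion, so downward induction on `T` gives `Q_T = 0`.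
-/

theorem List.sum_zipIdx_single_apply {α M : Type*} [DecidableEq α] [AddCommMonoid M]
    (c : ℕ → M) {l : List α} (hl : l.Nodup) (k : ℕ) (i : α) :
    ((l.zipIdx k).map fun p => Finsupp.single p.1 (c p.2)).sum i =
      if i ∈ l then c (k + l.idxOf i) else 0 := by
  induction l generalizing k with
  | nil => simp
  | cons a t ih =>
    obtain ⟨hat, ht⟩ := List.nodup_cons.mp hl
    by_cases hai : a = i
    · subst hai
      simp [ih ht, hat]
    · simp [ih ht, hai, Ne.symm hai, add_assoc, add_comm 1]

theorem Finset.eq_zero_of_sum_superset_mul_eq_zero {ι R : Type*} [Fintype ι] [DecidableEq ι]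
    [CommRing R] [NoZeroDivisors R] (p : Finset ι → Prop) [DecidablePred p]
    (c : Finset ι → Finset ι → R) (f : Finset ι → R) (hdiag : ∀ T, c T T ≠ 0)
    (hupper : ∀ T S, ¬T ⊆ S → c T S = 0)
    (h : ∀ T, p T → ∑ S ∈ Finset.univ.filter p, c T S * f S = 0) (T : Finset ι) (hT : p T) :
    f T = 0 := by
  refine Finset.strongDownwardInduction (p := fun T => p T → f T = 0) (n := Fintype.card ι)
    (fun T ih _ hT => ?_) T T.card_le_univ hT
  have hothers : ∀ S ∈ Finset.univ.filter p, S ≠ T → c T S * f S = 0 := by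
    intro S hS hST
    by_cases hTS : T ⊆ S
    · rw [ih S.card_le_univ (hTS.ssubset_of_ne hST.symm) (Finset.mem_filter.mp hS).2, mul_zero]
    · rw [hupper T S hTS, zero_mul]
  have hsum := h T hT
  rw [Finset.sum_eq_single_of_mem T (by simpa using hT) hothers] at hsum
  exact (mul_eq_zero.mp hsum).resolve_left (hdiag T)

open MvPolynomial

theorem MvPolynomial.eq_zero_of_forall_aeval_real_eq_zero {ι : Type*} {p : MvPolynomial ι ℚ}
    (h : ∀ z : ι → ℝ, aeval z p = 0) : p = 0 := by
  apply MvPolynomial.map_injective (algebraMap ℚ ℝ) (algebraMap ℚ ℝ).injective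
  refine MvPolynomial.funext fun z => ?_
  simpa [MvPolynomial.eval_map, MvPolynomial.aeval_def] using h z

theorem Real.exists_unit_sub_inv_eq (z : ℝ) : ∃ u : ℝˣ, (u : ℝ) - ↑u⁻¹ = z := by
  have hw : 0 ≤ z ^ 2 + 4 := by positivity
  have hsq := Real.sq_sqrt hw
  have hpos : 0 < z + √(z ^ 2 + 4) := by nlinarith [Real.sqrt_nonneg (z ^ 2 + 4)]
  refine ⟨Units.mk0 ((z + √(z ^ 2 + 4)) / 2) (by positivity), ?_⟩
  simp only [Units.val_inv_eq_inv_val, Units.val_mk0]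
  field_simp
  nlinarith

theorem Real.add_inv_ne_zero (u : ℝˣ) : (u : ℝ) + ↑u⁻¹ ≠ 0 := by
  intro h
  have : (u : ℝ) * (u + ↑u⁻¹) = u ^ 2 + 1 := by simp [mul_add, sq]
  rw [h, mul_zero] at this
  nlinarith [sq_nonneg (u : ℝ)]

section Decomposition

variable {n : ℕ}

theorem expS_apply (S : Finset (Fin n)) (i : Fin n) :
    expS S i = if i ∈ S then (-1) ^ (S.sort (· ≤ ·)).idxOf i else 0 := by
  simp [expS, List.sum_zipIdx_single_apply _ (S.sort_nodup _)]

theorem expS_eq_zero {S : Finset (Fin n)} {i : Fin n} (h : i ∉ S) : expS S i = 0 := by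
  simp [expS_apply, h]

theorem expS_eq_one_or_eq_neg_one {S : Finset (Fin n)} {i : Fin n} (h : i ∈ S) :
    expS S i = 1 ∨ expS S i = -1 := by
  simpa [expS_apply, h] using neg_one_pow_eq_or ℤ _

def decompSum (σ : Lam n →+* Lam n) (Q : Finset (Fin n) → MvPolynomial (Fin n) ℚ) : Lam n :=
  ∑ S ∈ Finset.univ.filter (fun S : Finset (Fin n) => Even S.card),
    bracket σ (MS S) * evalBr σ (Q S)

theorem decompSum_sub (σ : Lam n →+* Lam n) (P Q : Finset (Fin n) → MvPolynomial (Fin n) ℚ) :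
    decompSum σ (P - Q) = decompSum σ P - decompSum σ Q := by
  simp [decompSum, evalBr, mul_sub]

/-- The polynomial `c_{T,S}`: the signed average of `M_S(r)` over the flips is
`∏_{i ∈ T} (r_i + r_i⁻¹) · c_{T,S}(r - r⁻¹)`. -/
def avgCoeff (T S : Finset (Fin n)) : MvPolynomial (Fin n) ℚ :=
  ∏ i, if i ∈ T then (if i ∈ S then 1 else 0) else (if i ∈ S then C (expS S i : ℚ) * X i else 2)

theorem avgCoeff_self_ne_zero (T : Finset (Fin n)) : avgCoeff T T ≠ 0 := by
  rw [avgCoeff, Finset.prod_ne_zero_iff]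
  intro i _
  split_ifs <;> norm_num

theorem avgCoeff_eq_zero_of_not_subset {T S : Finset (Fin n)} (h : ¬T ⊆ S) :
    avgCoeff T S = 0 := by
  obtain ⟨i, hiT, hiS⟩ := Finset.not_subset.mp h
  exact Finset.prod_eq_zero (Finset.mem_univ i) (by simp [hiT, hiS])

end Decomposition

namespace Lam

variable {n : ℕ} {R : Type*} [CommRing R]

def flipIf (s : Bool) (u : Rˣ) : Rˣ := if s then -u⁻¹ else u

def boolSign (s : Bool) : R := if s then -1 else 1

theorem boolSign_not (s : Bool) : (boolSign (!s) : R) = -boolSign s := by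
  cases s <;> simp [boolSign]

theorem flipIf_sub_inv (s : Bool) (u : Rˣ) :
    (flipIf s u : R) - ↑(flipIf s u)⁻¹ = u - ↑u⁻¹ := by
  cases s <;> simp [flipIf, neg_add_eq_sub]

theorem neg_inv_flipIf (s : Bool) (u : Rˣ) : -(flipIf s u)⁻¹ = flipIf (!s) u := by
  cases s <;> simp [flipIf]

theorem sum_boolSign_mul_comp_not {T : Finset (Fin n)} (hT : Even T.card)
    (F : (Fin n → Bool) → R) :
    ∑ ε : Fin n → Bool, (∏ i ∈ T, boolSign (ε i)) * F (fun i => !ε i) =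
      ∑ ε : Fin n → Bool, (∏ i ∈ T, boolSign (ε i)) * F ε := by
  let e : (Fin n → Bool) ≃ (Fin n → Bool) := Equiv.piCongrRight fun _ => Equiv.boolNot
  rw [← e.sum_comp]
  refine Finset.sum_congr rfl fun ε _ => ?_
  simp [e, boolSign_not, Finset.prod_neg, hT.neg_one_pow]

variable [Algebra ℚ R]

def monomialEval (r : Fin n → Rˣ) : Multiplicative (Fin n →₀ ℤ) →* Rˣ where
  toFun a := ∏ i, r i ^ a.toAdd i
  map_one' := by simp
  map_mul' a b := by simp [zpow_add, Finset.prod_mul_distrib]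

def eval (r : Fin n → Rˣ) : Lam n →ₐ[ℚ] R :=
  AddMonoidAlgebra.lift ℚ R _ ((Units.coeHom R).comp (monomialEval r))

theorem eval_single (r : Fin n → Rˣ) (a : Fin n →₀ ℤ) (c : ℚ) :
    eval r (AddMonoidAlgebra.single a c) = c • ((∏ i, r i ^ a i : Rˣ) : R) := by
  simp [eval, monomialEval]

theorem eval_Xv (r : Fin n → Rˣ) (i : Fin n) : eval r (Xv i) = r i := by
  simp [Xv, eval_single, Finsupp.single_apply]

theorem algHom_ext {f g : Lam n →ₐ[ℚ] R} (h : ∀ i, f (Xv i) = g (Xv i)) : f = g := by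
  refine AddMonoidAlgebra.algHom_ext' ?_ (Subsingleton.elim _ _)
  apply MonoidHom.toAdditive.injective
  exact Finsupp.addHom_ext' fun i => AddMonoidHom.ext_int (h i)

theorem eval_sigma {σ : Lam n →+* Lam n} (hσ : IsSigma σ) (r : Fin n → Rˣ) (f : Lam n) :
    eval r (σ f) = eval (fun i => -(r i)⁻¹) f := by
  suffices (eval r).comp σ.toRatAlgHom = eval (fun i => -(r i)⁻¹) from AlgHom.congr_fun this f
  refine algHom_ext fun i => ?_
  have h := congrArg (eval r) (hσ i)
  rw [map_mul, map_neg, map_one, eval_Xv] at h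
  rw [AlgHom.comp_apply, RingHom.toRatAlgHom_apply, eval_Xv, Units.val_neg, ← neg_one_mul,
    Units.eq_mul_inv_iff_mul_eq, h]

theorem eval_evalBr {σ : Lam n →+* Lam n} (hσ : IsSigma σ) (r : Fin n → Rˣ)
    (Q : MvPolynomial (Fin n) ℚ) :
    eval r (evalBr σ Q) = aeval (fun i => (r i : R) - ↑(r i)⁻¹) Q := by
  simp [evalBr, MvPolynomial.comp_aeval_apply, bracket, eval_sigma hσ, eval_Xv, sub_eq_add_neg]

theorem eval_flipIf_evalBr {σ : Lam n →+* Lam n} (hσ : IsSigma σ) (r : Fin n → Rˣ)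
    (ε : Fin n → Bool) (Q : MvPolynomial (Fin n) ℚ) :
    eval (fun i => flipIf (ε i) (r i)) (evalBr σ Q) = aeval (fun i => (r i : R) - ↑(r i)⁻¹) Q := by
  simp only [eval_evalBr hσ, flipIf_sub_inv]

theorem eval_flipIf_sigma {σ : Lam n →+* Lam n} (hσ : IsSigma σ) (r : Fin n → Rˣ)
    (ε : Fin n → Bool) (f : Lam n) :
    eval (fun i => flipIf (ε i) (r i)) (σ f) = eval (fun i => flipIf (!ε i) (r i)) f := by
  simp only [eval_sigma hσ, neg_inv_flipIf]

theorem sum_bool_boolSign_mul_flipIf_zpow (r : Fin n → Rˣ) (T S : Finset (Fin n)) (i : Fin n) :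
    ∑ s : Bool, (if i ∈ T then boolSign s else 1) * ((flipIf s (r i) ^ expS S i : Rˣ) : R) =
      (if i ∈ T then (r i + ↑(r i)⁻¹ : R) else 1) *
        aeval (fun i => (r i : R) - ↑(r i)⁻¹)
          (if i ∈ T then (if i ∈ S then 1 else 0)
            else (if i ∈ S then C (expS S i : ℚ) * X i else 2)) := by
  rw [Fintype.sum_bool]
  by_cases hS : i ∈ S
  · rcases expS_eq_one_or_eq_neg_one hS with h | h <;>
      by_cases hT : i ∈ T <;> simp [h, hS, hT, flipIf, boolSign] <;> ring
  · by_cases hT : i ∈ T <;> simp [expS_eq_zero hS, hS, hT, flipIf, boolSign, one_add_one_eq_two]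

theorem sum_boolSign_mul_eval_MS (r : Fin n → Rˣ) (T S : Finset (Fin n)) :
    ∑ ε : Fin n → Bool, (∏ i ∈ T, boolSign (ε i)) * eval (fun i => flipIf (ε i) (r i)) (MS S) =
      (∏ i ∈ T, (r i + ↑(r i)⁻¹ : R)) * aeval (fun i => (r i : R) - ↑(r i)⁻¹) (avgCoeff T S) := by
  have hterm : ∀ ε : Fin n → Bool,
      (∏ i ∈ T, boolSign (ε i)) * eval (fun i => flipIf (ε i) (r i)) (MS S) =
        ∏ i, (if i ∈ T then boolSign (ε i) else 1) *
          ((flipIf (ε i) (r i) ^ expS S i : Rˣ) : R) := by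
    intro ε
    rw [MS, eval_single, one_smul, Units.coe_prod, Finset.prod_mul_distrib, Fintype.prod_ite_mem]
  rw [Finset.sum_congr rfl fun ε _ => hterm ε, ← Fintype.prod_sum
    (fun i (s : Bool) =>
      (if i ∈ T then boolSign s else 1) * ((flipIf s (r i) ^ expS S i : Rˣ) : R)),
    avgCoeff, map_prod, ← Fintype.prod_ite_mem T (fun i => (r i + ↑(r i)⁻¹ : R)),
    ← Finset.prod_mul_distrib]
  exact Finset.prod_congr rfl fun i _ => sum_bool_boolSign_mul_flipIf_zpow r T S i

theorem sum_boolSign_mul_eval_decompSum {σ : Lam n →+* Lam n} (hσ : IsSigma σ)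
    {T : Finset (Fin n)} (hT : Even T.card) (r : Fin n → Rˣ)
    (Q : Finset (Fin n) → MvPolynomial (Fin n) ℚ) :
    ∑ ε : Fin n → Bool,
        (∏ i ∈ T, boolSign (ε i)) * eval (fun i => flipIf (ε i) (r i)) (decompSum σ Q) =
      2 * (∏ i ∈ T, (r i + ↑(r i)⁻¹ : R)) * aeval (fun i => (r i : R) - ↑(r i)⁻¹)
        (∑ S ∈ Finset.univ.filter (fun S : Finset (Fin n) => Even S.card), avgCoeff T S * Q S) := by
  simp only [decompSum, map_sum, Finset.mul_sum]
  rw [Finset.sum_comm]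
  refine Finset.sum_congr rfl fun S _ => ?_
  have hsplit : ∀ ε : Fin n → Bool,
      (∏ i ∈ T, boolSign (ε i)) *
          eval (fun i => flipIf (ε i) (r i)) (bracket σ (MS S) * evalBr σ (Q S)) =
        aeval (fun i => (r i : R) - ↑(r i)⁻¹) (Q S) *
          ((∏ i ∈ T, boolSign (ε i)) * eval (fun i => flipIf (ε i) (r i)) (MS S) +
            (∏ i ∈ T, boolSign (ε i)) * eval (fun i => flipIf (!ε i) (r i)) (MS S)) := by
    intro ε
    rw [map_mul, bracket, map_add, eval_flipIf_sigma hσ, eval_flipIf_evalBr hσ]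
    ring
  rw [Finset.sum_congr rfl fun ε _ => hsplit ε, ← Finset.mul_sum, Finset.sum_add_distrib,
    sum_boolSign_mul_comp_not hT (fun ε => eval (fun i => flipIf (ε i) (r i)) (MS S)),
    sum_boolSign_mul_eval_MS, map_mul]
  ring

end Lam

theorem sum_avgCoeff_mul_eq_zero {n : ℕ} {σ : Lam n →+* Lam n} (hσ : IsSigma σ)
    {Q : Finset (Fin n) → MvPolynomial (Fin n) ℚ} (hQ : decompSum σ Q = 0)
    {T : Finset (Fin n)} (hT : Even T.card) :
    ∑ S ∈ Finset.univ.filter (fun S : Finset (Fin n) => Even S.card), avgCoeff T S * Q S = 0 := by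
  refine MvPolynomial.eq_zero_of_forall_aeval_real_eq_zero fun z => ?_
  choose u hu using fun i => Real.exists_unit_sub_inv_eq (z i)
  have h := Lam.sum_boolSign_mul_eval_decompSum hσ hT u Q
  simp only [hQ, map_zero, mul_zero, Finset.sum_const_zero, funext hu] at h
  have hw : 2 * ∏ i ∈ T, ((u i : ℝ) + ↑(u i)⁻¹) ≠ 0 :=
    mul_ne_zero two_ne_zero (Finset.prod_ne_zero_iff.mpr fun i _ => Real.add_inv_ne_zero (u i))
  exact (mul_eq_zero.mp h.symm).resolve_left hw

theorem eq_zero_of_decompSum_eq_zero {n : ℕ} {σ : Lam n →+* Lam n} (hσ : IsSigma σ)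
    {Q : Finset (Fin n) → MvPolynomial (Fin n) ℚ} (hQ : decompSum σ Q = 0)
    (T : Finset (Fin n)) (hT : Even T.card) : Q T = 0 :=
  Finset.eq_zero_of_sum_superset_mul_eq_zero (fun S => Even S.card) avgCoeff Q
    avgCoeff_self_ne_zero (fun _ _ => avgCoeff_eq_zero_of_not_subset)
    (fun _ hT => sum_avgCoeff_mul_eq_zero hσ hQ hT) T hT

theorem decomposition_unique_general (n : ℕ) (σ : Lam n →+* Lam n) (hσ : IsSigma σ)
    (Ω : Lam n) (P P' : Finset (Fin n) → MvPolynomial (Fin n) ℚ)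
    (hP : IsDecomposition σ Ω P) (hP' : IsDecomposition σ Ω P') :
    ∀ S : Finset (Fin n), Even S.card → P S = P' S := by
  have hP : Ω = decompSum σ P := hP
  have hP' : Ω = decompSum σ P' := hP'
  have hdiff : decompSum σ (P - P') = 0 := by rw [decompSum_sub, ← hP, ← hP', sub_self]
  exact fun S hS => sub_eq_zero.mp (eq_zero_of_decompSum_eq_zero hσ hdiff S hS)

/-- Theorem 4.4 (uniqueness): two decompositions of the same `Ω` agree on every
even-cardinality subset `S`. -/
theorem decomposition_unique (n : ℕ) (hn : 1 ≤ n) (σ : Lam n →+* Lam n) (hσ : IsSigma σ)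
    (Ω : Lam n) (P P' : Finset (Fin n) → MvPolynomial (Fin n) ℚ)
    (hP : IsDecomposition σ Ω P) (hP' : IsDecomposition σ Ω P') :
    ∀ S : Finset (Fin n), Even S.card → P S = P' S :=
  decomposition_unique_general n σ hσ Ω P P' hP hP'

end
end
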